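/- Let n ≥ 1 and let f(X) = X^{5^n−2} be the inverse function on F_{5^n}. Then the (−1)-differential spectrum of f satisfies ₋₁ω_0 = (5^n−1)/2, ₋₁ω_1 = 1, ₋₁ω_2 = (5^n−1)/2, and ₋₁ω_i = 0 for all i ≥ 3. -/

import Mathlib

/-!
For `f = x⁻¹` the entry `₋₁Δ_f(1, b)` counts the solutions of `(x + 1)⁻¹ + x⁻¹ = b`.
Away from `x ∈ {0, -1}` this is the quadratic `b x² + (b - 2) x - 1 = 0`, whose discriminant
`b² + 4` equals `(b - 1)(b + 1)` in characteristic 5. So the fibre over `0` is a single point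
and every other fibre has `0` or `2` points (over `b = ±1` a double root joins the exceptional
point `0`, resp. `-1`); counting `F` by fibres then determines the spectrum.
-/

open Finset

/-- The `c`-DDT entry of `f` at `(a, b)`:
the number of `x` with `f (x + a) - c * f x = b`. -/
def cDDT {F : Type*} [Field F] [Fintype F] [DecidableEq F]
    (f : F → F) (c a b : F) : ℕ :=
  (Finset.univ.filter (fun x : F => f (x + a) - c * f x = b)).card

/-- The `c`-differential uniformity of `f`: the maximum of the `c`-DDT entries
over all `a, b`, where `a ≠ 0` is required when `c = 1`. -/
def cDU {F : Type*} [Field F] [Fintype F] [DecidableEq F]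
    (f : F → F) (c : F) : ℕ :=
  (Finset.univ.filter (fun ab : F × F => c = 1 → ab.1 ≠ 0)).sup
    (fun ab => cDDT f c ab.1 ab.2)

/-- The classical differential uniformity of `f`. -/
def DU {F : Type*} [Field F] [Fintype F] [DecidableEq F] (f : F → F) : ℕ :=
  cDU f 1

/-- The BCT entry of `f` at `(a, b)`: the number of pairs `(x, y)` with
`f x - f y = b` and `f (x + a) - f (y + a) = b`. -/
def BCT {F : Type*} [Field F] [Fintype F] [DecidableEq F]
    (f : F → F) (a b : F) : ℕ :=
  (Finset.univ.filter (fun xy : F × F =>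
    f xy.1 - f xy.2 = b ∧ f (xy.1 + a) - f (xy.2 + a) = b)).card

/-- The boomerang uniformity of `f`: the maximum of the BCT entries over all
nonzero `a, b`. -/
def BU {F : Type*} [Field F] [Fintype F] [DecidableEq F] (f : F → F) : ℕ :=
  (Finset.univ.filter (fun ab : F × F => ab.1 ≠ 0 ∧ ab.2 ≠ 0)).sup
    (fun ab => BCT f ab.1 ab.2)

/-- The quadratic character: `χ 0 = 0`, `χ α = 1` if `α` is a nonzero square,
and `χ α = -1` otherwise. -/
noncomputable def chi {F : Type*} [Field F] (α : F) : ℤ :=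
  letI := Classical.dec (α = 0)
  letI := Classical.dec (IsSquare α)
  if α = 0 then 0 else if IsSquare α then 1 else -1

/-- The `c`-differential spectrum entry `ω_i` of a power function:
the number of `b` with `cΔ_f(1, b) = i`. -/
def omegaSpec {F : Type*} [Field F] [Fintype F] [DecidableEq F]
    (f : F → F) (c : F) (i : ℕ) : ℕ :=
  (Finset.univ.filter (fun b : F => cDDT f c 1 b = i)).card

/-- The boomerang spectrum entry `v_i` of a power function:
the number of nonzero `b` with `B_f(1, b) = i`. -/
def vSpec {F : Type*} [Field F] [Fintype F] [DecidableEq F]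
    (f : F → F) (i : ℕ) : ℕ :=
  (Finset.univ.filter (fun b : F => b ≠ 0 ∧ BCT f 1 b = i)).card

theorem FiniteField.pow_card_sub_two_eq_inv {K : Type*} [Field K] [Fintype K]
    (hK : 2 < Fintype.card K) (x : K) : x ^ (Fintype.card K - 2) = x⁻¹ := by
  rcases eq_or_ne x 0 with rfl | hx
  · rw [inv_zero, zero_pow (by omega)]
  refine eq_inv_of_mul_eq_one_left ?_
  rw [← pow_succ, show Fintype.card K - 2 + 1 = Fintype.card K - 1 by omega]
  exact FiniteField.pow_card_sub_one_eq_one x hx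

theorem card_filter_card_fiber_eq {α : Type*} [Fintype α] [DecidableEq α] (g : α → α)
    (b₀ : α) (h₀ : #{x | g x = b₀} = 1)
    (h : ∀ b ≠ b₀, #{x | g x = b} = 0 ∨ #{x | g x = b} = 2) :
    #{b | #{x | g x = b} = 0} = (Fintype.card α - 1) / 2 ∧
    #{b | #{x | g x = b} = 1} = 1 ∧
    #{b | #{x | g x = b} = 2} = (Fintype.card α - 1) / 2 ∧
    ∀ i, 3 ≤ i → #{b | #{x | g x = b} = i} = 0 := by
  set N : α → ℕ := fun b => #{x | g x = b}
  have hN : ∀ b, N b < 3 := fun b => by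
    rcases eq_or_ne b b₀ with rfl | hb
    · simp [N, h₀]
    · rcases h b hb with h | h <;> simp [N, h]
  have hN1 : ({b | N b = 1} : Finset α) = {b₀} := by
    ext b
    simp only [mem_filter, mem_univ, true_and, mem_singleton]
    refine ⟨fun hb => ?_, fun hb => hb ▸ h₀⟩
    by_contra hne
    rcases h b hne with h | h <;> simp only [N] at hb <;> omega
  -- count `α` once by fibres of `g`, and once more by grouping the fibres according to their size
  have hsum : Fintype.card α = ∑ b, N b := card_eq_sum_card_fiberwise (by simp)
  have hweighted : ∑ b, N b = ∑ i ∈ range 3, #{b | N b = i} * i := by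
    rw [← sum_fiberwise_of_maps_to (g := N) (t := range 3) (fun b _ => mem_range.2 (hN b))]
    refine sum_congr rfl fun i _ => ?_
    rw [sum_congr rfl fun b hb => (mem_filter.1 hb).2, sum_const, smul_eq_mul]
  have hcount : Fintype.card α = ∑ i ∈ range 3, #{b | N b = i} :=
    card_eq_sum_card_fiberwise fun b _ => mem_range.2 (hN b)
  simp only [sum_range_succ, sum_range_zero, hN1, card_singleton] at hweighted hcount
  simp only [N] at hsum hweighted hcount hN
  refine ⟨by omega, (congrArg card hN1).trans (card_singleton b₀), by omega, fun i hi => ?_⟩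
  exact card_eq_zero.2 (filter_eq_empty_iff.2 fun b _ => by have := hN b; omega)

theorem card_filter_quadratic_eq_zero_eq_zero_or_two {K : Type*} [Field K] [Fintype K]
    [DecidableEq K] [NeZero (2 : K)] {a b c : K} (ha : a ≠ 0) (hd : discrim a b c ≠ 0) :
    #{x | a * (x * x) + b * x + c = 0} = 0 ∨ #{x | a * (x * x) + b * x + c = 0} = 2 := by
  rcases eq_empty_or_nonempty ({x | a * (x * x) + b * x + c = 0} : Finset K) with h | ⟨r, hr⟩
  · exact Or.inl (card_eq_zero.2 h)
  right
  have hs := discrim_eq_sq_of_quadratic_eq_zero (mem_filter.1 hr).2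
  have hs0 : 2 * a * r + b ≠ 0 := fun h0 => hd (by rw [hs, h0, zero_pow two_ne_zero])
  rw [sq] at hs
  have hroots : ({x | a * (x * x) + b * x + c = 0} : Finset K) =
      {(-b + (2 * a * r + b)) / (2 * a), (-b - (2 * a * r + b)) / (2 * a)} := by
    ext x
    simp only [mem_filter, mem_univ, true_and, mem_insert, mem_singleton,
      quadratic_eq_zero_iff ha hs]
  rw [hroots, card_pair]
  rw [Ne, div_left_inj' (mul_ne_zero two_ne_zero ha)]
  intro h
  have h2 : 2 * (2 * a * r + b) = 0 := by linear_combination h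
  exact hs0 ((mul_eq_zero.1 h2).resolve_left two_ne_zero)

theorem inv_add_one_add_inv_eq_iff {F : Type*} [Field F] {x b : F} (hx0 : x ≠ 0)
    (hx1 : x + 1 ≠ 0) : (x + 1)⁻¹ + x⁻¹ = b ↔ b * (x * x) + (b - 2) * x + -1 = 0 := by
  rw [inv_add_inv hx1 hx0, div_eq_iff (mul_ne_zero hx1 hx0)]
  constructor <;> intro h <;> linear_combination -h

theorem two_ne_zero_of_five_eq_zero {R : Type*} [CommRing R] [Nontrivial R]
    (h5 : (5 : R) = 0) : (2 : R) ≠ 0 :=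
  fun h => one_ne_zero (α := R) (by linear_combination h5 - 2 * h)

section InverseDifference

variable {F : Type*} [Field F] [Fintype F] [DecidableEq F]

/-- `1` and `-1` are the values at `x = 0` and `x = -1`, where the quadratic does not vanish. -/
theorem filter_inv_add_one_add_inv_eq {b : F} (hb1 : b ≠ 1) (hbm1 : b ≠ -1) :
    ({x | (x + 1)⁻¹ + x⁻¹ = b} : Finset F) =
      ({x | b * (x * x) + (b - 2) * x + -1 = 0} : Finset F) := by
  ext x
  simp only [mem_filter, mem_univ, true_and]
  rcases eq_or_ne x 0 with rfl | hx0
  · simp only [zero_add, inv_one, inv_zero, add_zero, mul_zero, zero_add]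
    exact ⟨fun h => absurd h.symm hb1, fun h => absurd h (by norm_num)⟩
  rcases eq_or_ne (x + 1) 0 with hx1 | hx1
  · obtain rfl : x = -1 := eq_neg_of_add_eq_zero_left hx1
    simp only [hx1, inv_zero, zero_add, inv_neg, inv_one]
    exact ⟨fun h => absurd h.symm hbm1, fun h => absurd (by linear_combination h) one_ne_zero⟩
  exact inv_add_one_add_inv_eq_iff hx0 hx1

theorem card_filter_inv_add_one_add_inv_eq_zero [NeZero (2 : F)] :
    #{x : F | (x + 1)⁻¹ + x⁻¹ = 0} = 1 := by
  have hm1 : (0 : F) ≠ -1 := fun h => two_ne_zero (α := F) (by linear_combination 2 * h)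
  rw [filter_inv_add_one_add_inv_eq zero_ne_one hm1, card_eq_one]
  refine ⟨-2⁻¹, ?_⟩
  ext x
  simp only [mem_filter, mem_univ, true_and, mem_singleton]
  constructor
  · intro h
    field_simp
    linear_combination -h
  · rintro rfl
    field_simp
    ring

theorem filter_inv_add_one_add_inv_eq_one_of_five_eq_zero (h5 : (5 : F) = 0) :
    ({x | (x + 1)⁻¹ + x⁻¹ = 1} : Finset F) = {0, 3} := by
  have h2 : (2 : F) ≠ 0 := two_ne_zero_of_five_eq_zero h5
  have h3 : (3 : F) ≠ 0 := fun h => one_ne_zero (α := F) (by linear_combination 2 * h - h5)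
  have h4 : (3 : F) + 1 ≠ 0 := fun h => one_ne_zero (α := F) (by linear_combination h5 - h)
  ext x
  simp only [mem_filter, mem_univ, true_and, mem_insert, mem_singleton]
  refine ⟨fun h => ?_, ?_⟩
  · rcases eq_or_ne x 0 with hx0 | hx0
    · exact Or.inl hx0
    have hx1 : x + 1 ≠ 0 := by
      intro hx1
      rw [hx1, inv_zero, zero_add, eq_neg_of_add_eq_zero_left hx1, inv_neg, inv_one] at h
      exact h2 (by linear_combination -h)
    have hq := (inv_add_one_add_inv_eq_iff hx0 hx1).1 h
    have hsq : (x - 3) ^ 2 = 0 := by linear_combination hq + (2 - x) * h5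
    exact Or.inr (sub_eq_zero.1 ((pow_eq_zero_iff two_ne_zero).1 hsq))
  · rintro (rfl | rfl)
    · simp
    · rw [inv_add_one_add_inv_eq_iff h3 h4]
      linear_combination h5

theorem filter_inv_add_one_add_inv_eq_neg_one_of_five_eq_zero (h5 : (5 : F) = 0) :
    ({x | (x + 1)⁻¹ + x⁻¹ = -1} : Finset F) = {-1, 1} := by
  have h2 : (2 : F) ≠ 0 := two_ne_zero_of_five_eq_zero h5
  have h2' : (1 : F) + 1 ≠ 0 := fun h => h2 (by linear_combination h)
  ext x
  simp only [mem_filter, mem_univ, true_and, mem_insert, mem_singleton]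
  refine ⟨fun h => ?_, ?_⟩
  · rcases eq_or_ne (x + 1) 0 with hx1 | hx1
    · exact Or.inl (eq_neg_of_add_eq_zero_left hx1)
    have hx0 : x ≠ 0 := by
      rintro rfl
      rw [zero_add, inv_one, inv_zero, add_zero] at h
      exact h2 (by linear_combination h)
    have hq := (inv_add_one_add_inv_eq_iff hx0 hx1).1 h
    have hsq : (x - 1) ^ 2 = 0 := by linear_combination -hq - x * h5
    exact Or.inr (sub_eq_zero.1 ((pow_eq_zero_iff two_ne_zero).1 hsq))
  · rintro (rfl | rfl)
    · simp
    · rw [inv_add_one_add_inv_eq_iff one_ne_zero h2']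
      linear_combination -h5

theorem card_filter_inv_add_one_add_inv_eq_of_five_eq_zero (h5 : (5 : F) = 0) {b : F}
    (hb : b ≠ 0) :
    #{x : F | (x + 1)⁻¹ + x⁻¹ = b} = 0 ∨ #{x : F | (x + 1)⁻¹ + x⁻¹ = b} = 2 := by
  have h2 := two_ne_zero_of_five_eq_zero h5
  rcases eq_or_ne b 1 with rfl | hb1
  · refine Or.inr ?_
    rw [filter_inv_add_one_add_inv_eq_one_of_five_eq_zero h5, card_pair]
    exact fun h => one_ne_zero (α := F) (by linear_combination -2 * h - h5)
  rcases eq_or_ne b (-1) with rfl | hbm1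
  · refine Or.inr ?_
    rw [filter_inv_add_one_add_inv_eq_neg_one_of_five_eq_zero h5, card_pair]
    exact fun h => h2 (by linear_combination -h)
  have : NeZero (2 : F) := ⟨h2⟩
  rw [filter_inv_add_one_add_inv_eq hb1 hbm1]
  refine card_filter_quadratic_eq_zero_eq_zero_or_two hb ?_
  -- in characteristic 5 the discriminant `b ^ 2 + 4` is `(b - 1) * (b + 1)`
  rw [discrim, show (b - 2) ^ 2 - 4 * b * -1 = (b - 1) * (b + 1) by linear_combination h5]
  exact mul_ne_zero (sub_ne_zero.2 hb1) fun h => hbm1 (eq_neg_of_add_eq_zero_left h)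

end InverseDifference

theorem neg_one_spectrum_inverse_char_five (n : ℕ) (hn : 1 ≤ n)
    {F : Type*} [Field F] [Fintype F] [DecidableEq F]
    (hF : Fintype.card F = 5 ^ n)
    (f : F → F) (hf : ∀ x : F, f x = x ^ (5 ^ n - 2)) :
    omegaSpec f (-1) 0 = (5 ^ n - 1) / 2 ∧ omegaSpec f (-1) 1 = 1 ∧
    omegaSpec f (-1) 2 = (5 ^ n - 1) / 2 ∧
    ∀ i : ℕ, 3 ≤ i → omegaSpec f (-1) i = 0 := by
  have hq : 2 < Fintype.card F := hF ▸ lt_of_lt_of_le (by norm_num) (Nat.le_self_pow (by omega) 5)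
  have h5 : (5 : F) = 0 := by
    have h := FiniteField.cast_card_eq_zero F
    rw [hF, Nat.cast_pow] at h
    exact pow_eq_zero_iff (by omega) |>.1 h
  have : NeZero (2 : F) := ⟨two_ne_zero_of_five_eq_zero h5⟩
  have hDDT : ∀ b, cDDT f (-1) 1 b = #{x : F | (x + 1)⁻¹ + x⁻¹ = b} := fun b => by
    simp only [cDDT, hf, ← hF, FiniteField.pow_card_sub_two_eq_inv hq, neg_one_mul,
      sub_neg_eq_add]
  simp only [omegaSpec, hDDT]
  simpa only [hF] using card_filter_card_fiber_eq (fun x : F => (x + 1)⁻¹ + x⁻¹) 0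
    card_filter_inv_add_one_add_inv_eq_zero
    fun _ hb => card_filter_inv_add_one_add_inv_eq_of_five_eq_zero h5 hb
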